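/- arXiv:2510.11796 — 6 statements merged into one kernel-verified Lean document; each statement's English description precedes it below -/
import Mathlib

section
/- Let ω = ω' + iω'' ∈ ℂ with ω' > 0 and ω'' < 0, and let C, D ∈ ℝ with C + iD ≠ 1. Then there exist real numbers a > 0, p > 0 and γ > 0 such that a − ω² − iωγ ≠ 0 and 1 + p/(a − ω² − iωγ) = C + iD. In other words, a passive, lossy, causal Lorentz–Drude material can realize any prescribed complex permittivity value (other than 1) at any complex frequency lying in the open fourth quadrant. -/
open Complex Filter Topology

/-! Writing `z = a - ω² - iωγ`, the real and imaginary parts of `z` are affine in `(a, γ)`, and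
solving them gives `a = |ω|² + Re z + Im ω · Im z / Re ω` and `γ = -2 Im ω - Im z / Re ω`.
Taking `z = p / (C + iD - 1)` with `p > 0` small, these tend to `|ω|² > 0` and `-2 Im ω > 0`,
so they are positive, and then `1 + p / z = C + iD`. -/

namespace LorentzDrude

noncomputable def resonance (ω z : ℂ) : ℝ := normSq ω + z.re + ω.im * z.im / ω.re

noncomputable def damping (ω z : ℂ) : ℝ := -2 * ω.im - z.im / ω.re

theorem resonance_sub_sq_sub_damping {ω : ℂ} (hre : ω.re ≠ 0) (z : ℂ) :
    (resonance ω z : ℂ) - ω ^ 2 - I * ω * damping ω z = z := by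
  apply Complex.ext <;>
  · simp only [resonance, damping, normSq_apply, sub_re, sub_im, mul_re, mul_im, pow_two,
      ofReal_re, ofReal_im, I_re, I_im]
    field_simp
    ring

theorem continuous_resonance (ω : ℂ) : Continuous (resonance ω) := by
  unfold resonance
  fun_prop

theorem continuous_damping (ω : ℂ) : Continuous (damping ω) := by
  unfold damping
  fun_prop

theorem eventually_pos_resonance_damping {ω : ℂ} (hω : ω ≠ 0) (him : ω.im < 0) (u : ℂ) :
    ∀ᶠ p : ℝ in 𝓝[>] 0, 0 < resonance ω (p * u) ∧ 0 < damping ω (p * u) := by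
  have hpu : Tendsto (fun p : ℝ ↦ (p : ℂ) * u) (𝓝 0) (𝓝 0) := by
    have hcont : Continuous fun p : ℝ ↦ (p : ℂ) * u := by fun_prop
    simpa using hcont.tendsto 0
  have hres : Tendsto (fun p : ℝ ↦ resonance ω (p * u)) (𝓝 0) (𝓝 (normSq ω)) := by
    have h0 : resonance ω 0 = normSq ω := by simp [resonance]
    exact h0 ▸ ((continuous_resonance ω).tendsto 0).comp hpu
  have hdamp : Tendsto (fun p : ℝ ↦ damping ω (p * u)) (𝓝 0) (𝓝 (-2 * ω.im)) := by
    have h0 : damping ω 0 = -2 * ω.im := by simp [damping]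
    exact h0 ▸ ((continuous_damping ω).tendsto 0).comp hpu
  exact nhdsWithin_le_nhds <| (hres.eventually_const_lt (normSq_pos.mpr hω)).and
    (hdamp.eventually_const_lt (by linarith))

end LorentzDrude

open LorentzDrude in
/-- For any complex frequency `ω` in the open fourth quadrant
(`Re ω > 0`, `Im ω < 0`) and any target permittivity value `C + iD ≠ 1`, there exist
positive real Lorentz–Drude parameters `a = ω₀²`, `p = ωₚ²`, `γ` (passive, lossy, causal)
such that the denominator `a − ω² − iωγ` is nonzero and
`ε(ω) = 1 + p/(a − ω² − iωγ) = C + iD`. -/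
theorem lorentz_drude_realizes_any_value
    (ω : ℂ) (hre : 0 < ω.re) (him : ω.im < 0)
    (C D : ℝ) (hCD : (C : ℂ) + D * I ≠ 1) :
    ∃ a p γ : ℝ, 0 < a ∧ 0 < p ∧ 0 < γ ∧
      (a : ℂ) - ω ^ 2 - I * ω * γ ≠ 0 ∧
      1 + (p : ℂ) / ((a : ℂ) - ω ^ 2 - I * ω * γ) = (C : ℂ) + D * I := by
  have hω : ω ≠ 0 := fun h ↦ hre.ne' (by simp [h])
  have hw : (C : ℂ) + D * I - 1 ≠ 0 := sub_ne_zero.mpr hCD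
  set u := ((C : ℂ) + D * I - 1)⁻¹
  obtain ⟨p, ⟨ha, hγ⟩, hp⟩ :=
    ((eventually_pos_resonance_damping hω him u).and self_mem_nhdsWithin).exists
  have hp' : (p : ℂ) ≠ 0 := ofReal_ne_zero.mpr hp.ne'
  refine ⟨resonance ω (p * u), p, damping ω (p * u), ha, hp, hγ, ?_, ?_⟩ <;>
    rw [resonance_sub_sq_sub_damping hre.ne']
  · exact mul_ne_zero hp' (inv_ne_zero hw)
  · rw [div_mul_cancel_left₀ hp', inv_inv]
    ring
end

section
/- Let ω = ω' + iω'' ∈ ℂ with ω' ≠ 0, and let C, D ∈ ℝ with C + iD ≠ 1. Then the set of all real triples (a, p, γ) ∈ ℝ³ satisfying the denominator-cleared matching equation (C − 1 + iD)·(a − ω² − iωγ) = p is exactly the affine line { x_p + α·x_n : α ∈ ℝ }, where x_p = (ω'² + ω''², 0, −2ω'') and x_n = ( ω'(C−1) − ω''D, ω'((C−1)² + D²), D ). -/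
open Complex

/-- For `ω = ω' + iω''` with `ω' ≠ 0` and target value `C + iD ≠ 1`,
the solution set in `ℝ³` (as triples `(a, p, γ)`) of the denominator-cleared matching
equation `(C − 1 + iD)·(a − ω² − iωγ) = p` is exactly the affine line
`{ x_p + α·x_n : α ∈ ℝ }`, where `x_p = (ω'² + ω''², 0, −2ω'')` and
`x_n = (ω'(C−1) − ω''D, ω'((C−1)² + D²), D)`. -/
theorem solution_set_is_affine_line
    (ω : ℂ) (hre : ω.re ≠ 0) (C D : ℝ) (hCD : (C : ℂ) + D * I ≠ 1) :
    {x : ℝ × ℝ × ℝ |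
        ((C : ℂ) - 1 + D * I) * ((x.1 : ℂ) - ω ^ 2 - I * ω * (x.2.2 : ℂ)) = (x.2.1 : ℂ)} =
      {x : ℝ × ℝ × ℝ | ∃ α : ℝ,
        x = (ω.re ^ 2 + ω.im ^ 2, 0, -2 * ω.im) +
              α • (ω.re * (C - 1) - ω.im * D, ω.re * ((C - 1) ^ 2 + D ^ 2), D)} := by
  set u := ω.re with hu
  set v := ω.im with hv
  have hcd : (C - 1) ^ 2 + D ^ 2 ≠ 0 := by
    intro h
    have h1 : C - 1 = 0 ∧ D = 0 := by
      constructor <;> nlinarith [sq_nonneg (C - 1), sq_nonneg D]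
    apply hCD
    rw [show C = 1 by linarith [h1.1], h1.2]
    simp
  ext ⟨a, p, γ⟩
  simp only [Set.mem_setOf_eq, Complex.ext_iff, Prod.mk.injEq, Prod.ext_iff]
  constructor
  · rintro ⟨h1, h2⟩
    simp only [add_re, add_im, sub_re, sub_im, mul_re, mul_im, I_re, I_im, ofReal_re,
      ofReal_im, one_re, one_im, pow_two, ← hu, ← hv] at h1 h2
    refine ⟨p / (u * ((C - 1) ^ 2 + D ^ 2)), ?_, ?_, ?_⟩ <;>
        simp only [Prod.fst_add, Prod.snd_add, Prod.smul_mk, smul_eq_mul] <;>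
        field_simp
    · linear_combination ((C - 1) * u - D * v) * h1 + (D * u + (C - 1) * v) * h2
    · ring
    · linear_combination D * h1 - (C - 1) * h2
  · rintro ⟨α, h1, h2, h3⟩
    simp only [Prod.fst_add, Prod.snd_add, Prod.smul_mk, smul_eq_mul] at h1 h2 h3
    subst h1 h2 h3
    simp only [add_re, add_im, sub_re, sub_im, mul_re, mul_im, I_re, I_im, ofReal_re,
      ofReal_im, one_re, one_im, pow_two, ← hu, ← hv]
    constructor <;> push_cast <;> ring
end

section
/- Let ω = ω' + iω'' ∈ ℂ with ω' > 0 and ω'' < 0, and let C, D ∈ ℝ with C + iD ≠ 1. For α > 0 define a(α) = ω'² + ω''² + α(ω'(C−1) − ω''D), p(α) = α·ω'((C−1)² + D²), γ(α) = −2ω'' + αD. Then: (i) for every α > 0, a(α) − ω² − iωγ(α) = α·ω'((C−1) − iD) ≠ 0 and 1 + p(α)/(a(α) − ω² − iωγ(α)) = C + iD; and (ii) there exists α₀ > 0 such that for all α with 0 < α < α₀, all three numbers a(α), p(α), γ(α) are strictly positive. -/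
open Complex

/-- Let `ω = ω' + iω''` with `ω' > 0`, `ω'' < 0`, and `C + iD ≠ 1`.
For `α > 0` set `a(α) = ω'² + ω''² + α(ω'(C−1) − ω''D)`, `p(α) = α·ω'((C−1)² + D²)`,
`γ(α) = −2ω'' + αD`. Then
(i) for every `α > 0` the Lorentz–Drude denominator equals `α·ω'((C−1) − iD)`, is nonzero,
and `1 + p(α)/(a(α) − ω² − iωγ(α)) = C + iD`; and
(ii) there exists `α₀ > 0` such that for all `0 < α < α₀`, the three parameters
`a(α), p(α), γ(α)` are all strictly positive. -/
theorem one_parameter_family_of_lorentz_drude_fits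
    (ω : ℂ) (hre : 0 < ω.re) (him : ω.im < 0)
    (C D : ℝ) (hCD : (C : ℂ) + D * I ≠ 1) :
    (∀ α : ℝ, 0 < α →
      (((ω.re ^ 2 + ω.im ^ 2 + α * (ω.re * (C - 1) - ω.im * D) : ℝ) : ℂ) - ω ^ 2 -
            I * ω * ((-2 * ω.im + α * D : ℝ) : ℂ) =
          (α : ℂ) * (ω.re : ℂ) * (((C : ℂ) - 1) - D * I)) ∧
      (((ω.re ^ 2 + ω.im ^ 2 + α * (ω.re * (C - 1) - ω.im * D) : ℝ) : ℂ) - ω ^ 2 -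
            I * ω * ((-2 * ω.im + α * D : ℝ) : ℂ) ≠ 0) ∧
      1 + ((α * (ω.re * ((C - 1) ^ 2 + D ^ 2)) : ℝ) : ℂ) /
            (((ω.re ^ 2 + ω.im ^ 2 + α * (ω.re * (C - 1) - ω.im * D) : ℝ) : ℂ) - ω ^ 2 -
              I * ω * ((-2 * ω.im + α * D : ℝ) : ℂ)) = (C : ℂ) + D * I) ∧
    (∃ α₀ : ℝ, 0 < α₀ ∧ ∀ α : ℝ, 0 < α → α < α₀ →
      0 < ω.re ^ 2 + ω.im ^ 2 + α * (ω.re * (C - 1) - ω.im * D) ∧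
      0 < α * (ω.re * ((C - 1) ^ 2 + D ^ 2)) ∧
      0 < -2 * ω.im + α * D) := by

  have hCD' : ¬ (C = 1 ∧ D = 0) := by
    rintro ⟨rfl, rfl⟩
    simp at hCD
  have hsq : 0 < (C - 1) ^ 2 + D ^ 2 := by
    rcases eq_or_ne C 1 with hC | hC
    · rcases eq_or_ne D 0 with hD | hD
      · exact absurd ⟨hC, hD⟩ hCD'
      · positivity
    · have hC' : C - 1 ≠ 0 := sub_ne_zero.mpr hC
      positivity
  have hz : ((C : ℂ) - 1) - D * I ≠ 0 := by
    intro h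
    apply hCD'
    have h1 := congrArg Complex.re h
    have h2 := congrArg Complex.im h
    simp at h1 h2
    constructor <;> linarith [h1, h2]
  constructor
  · intro α hα
    have hden : (((ω.re ^ 2 + ω.im ^ 2 + α * (ω.re * (C - 1) - ω.im * D) : ℝ) : ℂ) - ω ^ 2 -
            I * ω * ((-2 * ω.im + α * D : ℝ) : ℂ) =
          (α : ℂ) * (ω.re : ℂ) * (((C : ℂ) - 1) - D * I)) := by
      simp only [Complex.ext_iff, pow_two, Complex.mul_re, Complex.mul_im, Complex.sub_re,
        Complex.sub_im, Complex.add_re, Complex.add_im, Complex.ofReal_re, Complex.ofReal_im,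
        Complex.I_re, Complex.I_im, Complex.one_re, Complex.one_im]
      constructor <;> ring
    have hne' : (α : ℂ) * (ω.re : ℂ) * (((C : ℂ) - 1) - D * I) ≠ 0 :=
      mul_ne_zero (mul_ne_zero (by exact_mod_cast hα.ne') (by exact_mod_cast hre.ne')) hz
    have hne : (((ω.re ^ 2 + ω.im ^ 2 + α * (ω.re * (C - 1) - ω.im * D) : ℝ) : ℂ) - ω ^ 2 -
            I * ω * ((-2 * ω.im + α * D : ℝ) : ℂ) ≠ 0) := by
      rw [hden]; exact hne'
    refine ⟨hden, hne, ?_⟩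
    rw [hden]
    have hα0 : (α : ℂ) ≠ 0 := by exact_mod_cast hα.ne'
    have hr0 : (ω.re : ℂ) ≠ 0 := by exact_mod_cast hre.ne'
    push_cast
    field_simp
    ring_nf
    simp only [Complex.I_sq]
    ring
  · set M := ω.re * (C - 1) - ω.im * D with hM
    set S := ω.re ^ 2 + ω.im ^ 2 with hS
    have hSpos : 0 < S := by positivity
    refine ⟨min (S / (|M| + 1)) ((-2 * ω.im) / (|D| + 1)), ?_, ?_⟩
    · apply lt_min
      · positivity
      · apply div_pos (by linarith) (by positivity)
    · intro α hα hα'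
      have h1 : α < S / (|M| + 1) := lt_of_lt_of_le hα' (min_le_left _ _)
      have h2 : α < (-2 * ω.im) / (|D| + 1) := lt_of_lt_of_le hα' (min_le_right _ _)
      have hM1 : α * (|M| + 1) < S := by
        rw [← lt_div_iff₀ (by positivity)]; exact h1
      have hD1 : α * (|D| + 1) < -2 * ω.im := by
        rw [← lt_div_iff₀ (by positivity)]; exact h2
      have habsM : -|M| ≤ M := neg_abs_le M
      have habsD : -|D| ≤ D := neg_abs_le D
      refine ⟨?_, ?_, ?_⟩
      · nlinarith [abs_nonneg M]
      · positivity
      · nlinarith [abs_nonneg D]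
end

section
/- Let ω = ω' + iω'' ∈ ℂ with ω' > 0 and ω'' < 0, and let q_ε, q_μ > 0 be real. Then there exist four triples of positive real numbers (a_k, p_k, γ_k), k = 1, 2, 3, 4, such that the corresponding Lorentz–Drude functions satisfy ε₁(ω) = q_ε/ω, ε₂(ω) = −q_ε/ω, μ₁(ω) = q_μ/ω, μ₂(ω) = −q_μ/ω (where ε_k(ω) = 1 + p_k/(a_k − ω² − iωγ_k), with triples 1,2 giving ε₁, ε₂ and triples 3,4 giving μ₁, μ₂). Consequently ε₂(ω) = −ε₁(ω) and μ₂(ω) = −μ₁(ω) (a complementary-media pair), the products ω·ε_j(ω) and ω·μ_j(ω) are real for j = 1, 2, and ω²·ε_j(ω)·μ_j(ω) = q_ε·q_μ > 0 for j = 1, 2, so both media support a purely real squared wavevector at the complex frequency ω. -/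
open Complex

/-- The Lorentz–Drude permittivity `ε(ω) = 1 + p/(a − ω² − iωγ)` with parameters
`a = ω₀²`, `p = ωₚ²`, damping `γ`, evaluated at the (complex) frequency `ω`. -/
noncomputable def lorentzDrude (a p γ : ℝ) (ω : ℂ) : ℂ :=
  1 + (p : ℂ) / ((a : ℂ) - ω ^ 2 - I * ω * (γ : ℂ))

lemma exists_LD (ω : ℂ) (hx : 0 < ω.re) (hy : ω.im < 0) (r : ℝ) :
    ∃ a p γ : ℝ, 0 < a ∧ 0 < p ∧ 0 < γ ∧ lorentzDrude a p γ ω = (r : ℂ) / ω := by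
  set x := ω.re with hxdef
  set y := ω.im with hydef
  have hMpos : 0 < |r| + x + 1 := by positivity
  have hNpos : 0 < (r - x)^2 + y^2 := by nlinarith [sq_nonneg (r - x)]
  set M : ℝ := |r| + x + 1 with hM
  set N : ℝ := (r - x)^2 + y^2 with hN
  set a : ℝ := (x^2 + y^2) * (|r| + r + 1) / M with ha
  set p : ℝ := x * N / M with hp
  set γ : ℝ := (-y) * (2 + r / M) with hγ
  have habs1 : -|r| ≤ r := neg_abs_le r
  have habs2 : r ≤ |r| := le_abs_self r
  have hapos : 0 < a := by
    apply div_pos _ hMpos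
    apply mul_pos (by nlinarith) (by nlinarith)
  have hppos : 0 < p := div_pos (mul_pos hx hNpos) hMpos
  have hγpos : 0 < γ := by
    apply mul_pos (by linarith)
    have : -1 < r / M := by rw [lt_div_iff₀ hMpos]; nlinarith
    linarith
  have hω : ω ≠ 0 := by
    intro h; rw [hxdef, h] at hx; simp at hx
  have hden : (r : ℂ) - ω ≠ 0 := by
    intro h
    have h2 := congrArg Complex.im h
    simp at h2
    rw [← hydef] at h2
    linarith
  have hmul : ((a : ℂ) - ω^2 - I * ω * (γ : ℂ)) * ((r : ℂ) - ω) = (p : ℂ) * ω := by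
    rw [Complex.ext_iff]
    simp only [pow_two, mul_re, mul_im, sub_re, sub_im, ofReal_re, ofReal_im, I_re, I_im,
      ← hxdef, ← hydef]
    rw [ha, hp, hγ, hM, hN]
    constructor <;> (field_simp; ring)
  have hd : ((a : ℂ) - ω^2 - I * ω * (γ : ℂ)) ≠ 0 := by
    intro h
    rw [h, zero_mul] at hmul
    rcases mul_eq_zero.mp hmul.symm with h' | h'
    · exact hppos.ne' (by exact_mod_cast h')
    · exact hω h'
  refine ⟨a, p, γ, hapos, hppos, hγpos, ?_⟩
  unfold lorentzDrude
  rw [add_div' _ _ _ hd, div_eq_div_iff hd hω]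
  linear_combination -hmul

/-- For any complex frequency `ω` in the open fourth quadrant and any
positive reals `q_ε, q_μ`, there exist four passive, lossy, causal Lorentz–Drude material
triples realizing `ε₁(ω) = q_ε/ω`, `ε₂(ω) = −q_ε/ω`, `μ₁(ω) = q_μ/ω`, `μ₂(ω) = −q_μ/ω`.
Consequently `ε₂ = −ε₁` and `μ₂ = −μ₁` (a complementary-media pair), the products
`ω·ε_j(ω)` and `ω·μ_j(ω)` are real, and `ω²·ε_j(ω)·μ_j(ω) = q_ε·q_μ > 0` for `j = 1, 2`,
so both media support a purely real squared wavevector at `ω`. -/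
theorem complementary_media_from_lossy_lorentz_drude
    (ω : ℂ) (hre : 0 < ω.re) (him : ω.im < 0)
    (qε qμ : ℝ) (hqε : 0 < qε) (hqμ : 0 < qμ) :
    ∃ a₁ p₁ γ₁ a₂ p₂ γ₂ a₃ p₃ γ₃ a₄ p₄ γ₄ : ℝ,
      (0 < a₁ ∧ 0 < p₁ ∧ 0 < γ₁) ∧ (0 < a₂ ∧ 0 < p₂ ∧ 0 < γ₂) ∧
      (0 < a₃ ∧ 0 < p₃ ∧ 0 < γ₃) ∧ (0 < a₄ ∧ 0 < p₄ ∧ 0 < γ₄) ∧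
      lorentzDrude a₁ p₁ γ₁ ω = (qε : ℂ) / ω ∧
      lorentzDrude a₂ p₂ γ₂ ω = -((qε : ℂ) / ω) ∧
      lorentzDrude a₃ p₃ γ₃ ω = (qμ : ℂ) / ω ∧
      lorentzDrude a₄ p₄ γ₄ ω = -((qμ : ℂ) / ω) ∧
      lorentzDrude a₂ p₂ γ₂ ω = -lorentzDrude a₁ p₁ γ₁ ω ∧
      lorentzDrude a₄ p₄ γ₄ ω = -lorentzDrude a₃ p₃ γ₃ ω ∧
      (ω * lorentzDrude a₁ p₁ γ₁ ω).im = 0 ∧ (ω * lorentzDrude a₂ p₂ γ₂ ω).im = 0 ∧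
      (ω * lorentzDrude a₃ p₃ γ₃ ω).im = 0 ∧ (ω * lorentzDrude a₄ p₄ γ₄ ω).im = 0 ∧
      ω ^ 2 * lorentzDrude a₁ p₁ γ₁ ω * lorentzDrude a₃ p₃ γ₃ ω = (qε : ℂ) * (qμ : ℂ) ∧
      ω ^ 2 * lorentzDrude a₂ p₂ γ₂ ω * lorentzDrude a₄ p₄ γ₄ ω = (qε : ℂ) * (qμ : ℂ) ∧
      0 < qε * qμ := by
  have hω : ω ≠ 0 := by
    intro h; rw [h] at hre; simp at hre
  obtain ⟨a₁, p₁, γ₁, h1a, h1p, h1g, h1⟩ := exists_LD ω hre him qε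
  obtain ⟨a₂, p₂, γ₂, h2a, h2p, h2g, h2⟩ := exists_LD ω hre him (-qε)
  obtain ⟨a₃, p₃, γ₃, h3a, h3p, h3g, h3⟩ := exists_LD ω hre him qμ
  obtain ⟨a₄, p₄, γ₄, h4a, h4p, h4g, h4⟩ := exists_LD ω hre him (-qμ)
  have h2' : lorentzDrude a₂ p₂ γ₂ ω = -((qε : ℂ) / ω) := by
    rw [h2]; push_cast; ring
  have h4' : lorentzDrude a₄ p₄ γ₄ ω = -((qμ : ℂ) / ω) := by
    rw [h4]; push_cast; ring
  refine ⟨a₁, p₁, γ₁, a₂, p₂, γ₂, a₃, p₃, γ₃, a₄, p₄, γ₄,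
    ⟨h1a, h1p, h1g⟩, ⟨h2a, h2p, h2g⟩, ⟨h3a, h3p, h3g⟩, ⟨h4a, h4p, h4g⟩,
    h1, h2', h3, h4', by rw [h2', h1], by rw [h4', h3], ?_, ?_, ?_, ?_, ?_, ?_,
    mul_pos hqε hqμ⟩
  · rw [h1, mul_div_cancel₀ _ hω]; simp
  · have : ω * -((qε : ℂ) / ω) = -(qε : ℂ) := by field_simp
    rw [h2', this]; simp
  · rw [h3, mul_div_cancel₀ _ hω]; simp
  · have : ω * -((qμ : ℂ) / ω) = -(qμ : ℂ) := by field_simp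
    rw [h4', this]; simp
  · rw [h1, h3]; field_simp
  · rw [h2', h4']; field_simp
end

section
/- Let a, p, γ ∈ ℝ with p > 0 and γ > 0, let ω = ω' + iω'' ∈ ℂ with ω' > 0, and assume a − ω² − iωγ ≠ 0. Let ε(ω) = 1 + p/(a − ω² − iωγ). Then Im ε(ω) has the same sign as 2ω'' + γ; in particular, Im ε(ω) < 0 (effective gain) if and only if ω'' < −γ/2, Im ε(ω) = 0 if and only if ω'' = −γ/2, and Im ε(ω) > 0 (effective loss) if and only if ω'' > −γ/2. Thus a passive, lossy material can exhibit effective gain only under a temporally decaying (Im ω < 0) complex-frequency excitation. -/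
/-
With `D = a − ω² − iωγ` one has `Im D = −ω'(2ω'' + γ)`, and since `p` is real,
`Im (p / D) = −p Im D / |D|²`. Hence `Im ε(ω) = (2pω' / |D|²) (ω'' + γ/2)`, a positive multiple
of `ω'' + γ/2` whenever `p, ω' > 0` and `D ≠ 0`.
-/

open Complex

theorem sign_mul_sub_iff_of_pos {α : Type*} [Ring α] [LinearOrder α] [IsStrictOrderedRing α]
    {c x y : α} (hc : 0 < c) :
    (c * (x - y) < 0 ↔ x < y) ∧ (c * (x - y) = 0 ↔ x = y) ∧ (0 < c * (x - y) ↔ y < x) := by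
  refine ⟨?_, ?_, ?_⟩
  · rw [← mul_zero c, mul_lt_mul_iff_right₀ hc, sub_neg]
  · rw [mul_eq_zero_iff_left hc.ne', sub_eq_zero]
  · rw [mul_pos_iff_of_pos_left hc, sub_pos]

theorem Complex.im_ofReal_div (p : ℝ) (z : ℂ) : ((p : ℂ) / z).im = -(p * z.im) / normSq z := by
  rw [div_im, ofReal_im, ofReal_re, zero_mul, zero_div, zero_sub, neg_div]

theorem im_lorentzDrude_denom (a γ : ℝ) (ω : ℂ) :
    ((a : ℂ) - ω ^ 2 - I * ω * γ).im = -(2 * ω.re * (ω.im - -γ / 2)) := by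
  simp only [sub_im, ofReal_im, mul_im, mul_re, I_re, I_im, ofReal_re, pow_two]
  ring

theorem im_lorentzDrude (a p γ : ℝ) (ω : ℂ) :
    (1 + (p : ℂ) / ((a : ℂ) - ω ^ 2 - I * ω * γ)).im =
      2 * p * ω.re / normSq ((a : ℂ) - ω ^ 2 - I * ω * γ) * (ω.im - -γ / 2) := by
  rw [add_im, one_im, zero_add, im_ofReal_div, im_lorentzDrude_denom]
  ring

theorem sign_of_im_eps_lorentz_drude_general
    (a p γ : ℝ) (hp : 0 < p)
    (ω : ℂ) (hre : 0 < ω.re)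
    (hden : (a : ℂ) - ω ^ 2 - I * ω * (γ : ℂ) ≠ 0) :
    ((1 + (p : ℂ) / ((a : ℂ) - ω ^ 2 - I * ω * (γ : ℂ))).im < 0 ↔ ω.im < -γ / 2) ∧
    ((1 + (p : ℂ) / ((a : ℂ) - ω ^ 2 - I * ω * (γ : ℂ))).im = 0 ↔ ω.im = -γ / 2) ∧
    (0 < (1 + (p : ℂ) / ((a : ℂ) - ω ^ 2 - I * ω * (γ : ℂ))).im ↔ -γ / 2 < ω.im) := by
  have hscale : 0 < 2 * p * ω.re / normSq ((a : ℂ) - ω ^ 2 - I * ω * γ) := by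
    have := normSq_pos.mpr hden
    positivity
  rw [im_lorentzDrude]
  exact sign_mul_sub_iff_of_pos hscale

/-- For a Lorentz–Drude permittivity `ε(ω) = 1 + p/(a − ω² − iωγ)` with
`p > 0`, `γ > 0`, evaluated at `ω = ω' + iω''` with `ω' > 0` (nonzero denominator),
the sign of `Im ε(ω)` is that of `2ω'' + γ`: `Im ε(ω) < 0` (effective gain) iff
`ω'' < −γ/2`; `Im ε(ω) = 0` iff `ω'' = −γ/2`; and `Im ε(ω) > 0` (effective loss) iff
`ω'' > −γ/2`. Thus a passive, lossy material exhibits effective gain only under a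
temporally decaying (`Im ω < 0`) complex-frequency excitation. -/
theorem sign_of_im_eps_lorentz_drude
    (a p γ : ℝ) (hp : 0 < p) (hγ : 0 < γ)
    (ω : ℂ) (hre : 0 < ω.re)
    (hden : (a : ℂ) - ω ^ 2 - I * ω * (γ : ℂ) ≠ 0) :
    ((1 + (p : ℂ) / ((a : ℂ) - ω ^ 2 - I * ω * (γ : ℂ))).im < 0 ↔ ω.im < -γ / 2) ∧
    ((1 + (p : ℂ) / ((a : ℂ) - ω ^ 2 - I * ω * (γ : ℂ))).im = 0 ↔ ω.im = -γ / 2) ∧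
    (0 < (1 + (p : ℂ) / ((a : ℂ) - ω ^ 2 - I * ω * (γ : ℂ))).im ↔ -γ / 2 < ω.im) :=
  sign_of_im_eps_lorentz_drude_general a p γ hp ω hre hden
end

section
/- Let κ, q ∈ ℂ with κ ≠ 0 and q ≠ 0, and let d₁, d₂ ∈ ℂ. Then T(κ, q, d₂) · T(κ, −q, d₁ + d₂) · T(κ, q, d₁) = I, where I is the 2×2 identity matrix. That is, a three-layer structure consisting of a slab of thickness d₁ of a medium, a slab of thickness d₁ + d₂ of its complementary medium, and a slab of thickness d₂ of the original medium has overall transfer matrix equal to the identity for every transverse wavevector — the ideal perfect-lens configuration with unity transmission and zero phase for both propagating and evanescent waves. -/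
open Complex Matrix

/-- The 2×2 transfer matrix of a homogeneous slab of thickness `d` with longitudinal
wavevector `κ` and admittance parameter `q` (for TM polarization, `q = ωε`):
`T(κ, q, d) = [[cos(κd), −(q/κ)·sin(κd)], [(κ/q)·sin(κd), cos(κd)]]`. -/
noncomputable def slabTransfer (κ q d : ℂ) : Matrix (Fin 2) (Fin 2) ℂ :=
  !![Complex.cos (κ * d), -(q / κ) * Complex.sin (κ * d);
     (κ / q) * Complex.sin (κ * d), Complex.cos (κ * d)]

/-- The ideal perfect-lens configuration: a slab of thickness `d₁` of a
medium, a slab of thickness `d₁ + d₂` of its complementary medium (`q ↦ −q`, same `κ`),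
and a slab of thickness `d₂` of the original medium together have overall transfer matrix
equal to the identity, `T(κ, q, d₂) · T(κ, −q, d₁ + d₂) · T(κ, q, d₁) = I`, for every
transverse wavevector — unity transmission and zero phase for both propagating and
evanescent waves. -/
theorem perfect_lens_transfer_identity
    (κ q : ℂ) (hκ : κ ≠ 0) (hq : q ≠ 0) (d₁ d₂ : ℂ) :
    slabTransfer κ q d₂ * slabTransfer κ (-q) (d₁ + d₂) * slabTransfer κ q d₁ = 1 := by
  have key : ∀ a b c1 s1 c2 s2 : ℂ, a * b = 1 → s1^2 + c1^2 = 1 → s2^2 + c2^2 = 1 →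
      (!![c2, -a*s2; b*s2, c2] *
       !![c1*c2 - s1*s2, a*(s1*c2 + c1*s2); -(b*(s1*c2 + c1*s2)), c1*c2 - s1*s2] *
       !![c1, -a*s1; b*s1, c1] : Matrix (Fin 2) (Fin 2) ℂ) = 1 := by
    intro a b c1 s1 c2 s2 hab h1 h2
    have h12 : (s1^2 + c1^2) * (s2^2 + c2^2) = 1 := by rw [h1, h2, one_mul]
    rw [Matrix.mul_fin_two, Matrix.mul_fin_two, Matrix.one_fin_two]
    ext i j
    fin_cases i <;> fin_cases j <;>
      simp only [Fin.mk_zero, Fin.mk_one, Matrix.cons_val', Matrix.cons_val_zero,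
        Matrix.cons_val_one, Matrix.head_cons, Matrix.of_apply, Matrix.empty_val',
        Matrix.cons_val_fin_one, Fin.isValue, Matrix.vecHead, Matrix.vecTail]
    · linear_combination h12 +
        ((s1*c2 + c1*s2)^2 - s1*s2*(c1*c2 - s1*s2)) * hab
    · linear_combination (-(a*s1*s2*(s1*c2 + c1*s2))) * hab
    · linear_combination (b*s1*s2*(s1*c2 + c1*s2)) * hab
    · linear_combination h12 +
        ((s1*c2 + c1*s2)^2 - s1*s2*(c1*c2 - s1*s2)) * hab
  have hab : (q/κ) * (κ/q) = 1 := by field_simp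
  have h := key (q/κ) (κ/q) (Complex.cos (κ*d₁)) (Complex.sin (κ*d₁))
    (Complex.cos (κ*d₂)) (Complex.sin (κ*d₂)) hab
    (Complex.sin_sq_add_cos_sq _) (Complex.sin_sq_add_cos_sq _)
  have e1 : κ*(d₁+d₂) = κ*d₁ + κ*d₂ := by ring
  simp only [slabTransfer, e1, Complex.cos_add, Complex.sin_add]
  convert h using 3 <;> (field_simp <;> ring_nf)
end
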